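/- Let 0 < α < 1 and β > 0, let φ be an analytic self-map of the open unit disk D, and let g be analytic on D. Then the operator C_φV_g, defined by (C_φV_g f)(z) = ∫₀^{φ(z)} f'(ξ) g(ξ) dξ, is bounded from Z^α to Z^β if and only if (g∘φ)·φ'' + (g'∘φ)·(φ')² ∈ H_{v_β}^∞ and sup_{z∈D} (1−|z|²)^β |g(φ(z)) (φ'(z))²| / (1−|φ(z)|²)^α < ∞. -/

import Mathlib

noncomputable section

/-- The open unit disk in the complex plane. -/
def uD : Set ℂ := Metric.ball 0 1

/-- The Zygmund-type quantity `(1-|z|^2)^a * |f''(z)|`. -/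
def zygS (a : ℝ) (f : ℂ → ℂ) (z : ℂ) : ℝ := (1 - ‖z‖ ^ 2) ^ a * ‖deriv (deriv f) z‖

/-- Membership in the Zygmund-type space `Z^a`. -/
def memZ (a : ℝ) (f : ℂ → ℂ) : Prop :=
  AnalyticOn ℂ f uD ∧ ∃ M : ℝ, ∀ z ∈ uD, zygS a f z ≤ M

/-- The Zygmund-type norm `‖f‖_{Z^a} = |f 0| + |f' 0| + sup_{z ∈ D} (1-|z|^2)^a |f''(z)|`. -/
def zNorm (a : ℝ) (f : ℂ → ℂ) : ℝ := ‖f 0‖ + ‖deriv f 0‖ + sSup (zygS a f '' uD)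

/-- Membership in the weighted space `H^∞_{v_b}` (for `u` analytic on `uD`). -/
def memHv (b : ℝ) (u : ℂ → ℂ) : Prop :=
  ∃ M : ℝ, ∀ z ∈ uD, (1 - ‖z‖ ^ 2) ^ b * ‖u z‖ ≤ M

/-- `T` is a bounded operator from `Z^a` to `Z^b`. -/
def boundedOp (a b : ℝ) (T : (ℂ → ℂ) → ℂ → ℂ) : Prop :=
  (∀ f, memZ a f → memZ b (T f)) ∧
    ∃ C > 0, ∀ f, memZ a f → zNorm b (T f) ≤ C * zNorm a f

/-- `(C_φ V_g f)(z) = ∫₀^{φ(z)} f'(ξ) g(ξ) dξ`, parametrized along the segment from `0` to `φ z`. -/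
def CphiVg (g φ : ℂ → ℂ) (f : ℂ → ℂ) : ℂ → ℂ :=
  fun z => ∫ t in (0:ℝ)..1, φ z * (deriv f ((t : ℂ) * φ z) * g ((t : ℂ) * φ z))

/-!
Writing `F` for the primitive of `f' g` vanishing at `0`, we have `C_φV_g f = F ∘ φ`, hence
`(C_φV_g f)'' = (f'' ∘ φ) v + (f' ∘ φ) u` with `u = (g ∘ φ) φ'' + (g' ∘ φ) φ'²` and
`v = (g ∘ φ) φ'²`. For `f ∈ Z^α` we have `|f''(w)| ≤ ‖f‖ (1 - |w|²)^(-α)`, and since `α < 1` this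
bound is integrable along radii, so `f'` is bounded by `‖f‖ / (1 - α)`; this gives sufficiency.
For necessity, `f = z` and `f = z² / 2` put `u` and `v` in `H^∞_{v_β}`, which settles the points
with `|φ(z)| < 1/2`. Elsewhere one tests on `f_a` with `f_a'' = (1 - ā z)^(-α)` and `a = φ(z)`:
these are bounded in `Z^α` uniformly in `|a| ≥ 1/2`, and `|f_a''(a)| = (1 - |a|²)^(-α)`.
-/

open Metric Set Filter Topology MeasureTheory intervalIntegral ComplexConjugate

lemma isOpen_uD : IsOpen uD := isOpen_ball

lemma mem_uD {z : ℂ} : z ∈ uD ↔ ‖z‖ < 1 := mem_ball_zero_iff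

lemma one_sub_norm_sq_pos {z : ℂ} (hz : z ∈ uD) : 0 < 1 - ‖z‖ ^ 2 := by
  have := mem_uD.1 hz
  nlinarith [norm_nonneg z]

lemma ofReal_mul_mem_ball_zero {r t : ℝ} {w : ℂ} (ht : t ∈ Icc (0 : ℝ) 1)
    (hw : w ∈ ball (0 : ℂ) r) : (t : ℂ) * w ∈ ball (0 : ℂ) r := by
  rw [mem_ball_zero_iff, norm_mul, Complex.norm_real, Real.norm_of_nonneg ht.1] at *
  exact (mul_le_of_le_one_left (norm_nonneg w) ht.2).trans_lt hw

lemma HasDerivAt.comp_ofReal_mul {F : ℂ → ℂ} {F' w : ℂ} {t : ℝ}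
    (hF : HasDerivAt F F' (t * w)) : HasDerivAt (fun s : ℝ => F (s * w)) (w * F') t := by
  have := hF.comp (t : ℂ) ((hasDerivAt_id (t : ℂ)).mul_const w)
  simpa [mul_comm] using this.comp_ofReal

def radialPrimitive (h : ℂ → ℂ) (w : ℂ) : ℂ := ∫ t in (0 : ℝ)..1, w * h (t * w)

lemma radialPrimitive_eq_sub {F h : ℂ → ℂ} {r : ℝ} (hF : ∀ z ∈ ball (0 : ℂ) r, HasDerivAt F (h z) z)
    (hh : ContinuousOn h (ball (0 : ℂ) r)) {w : ℂ} (hw : w ∈ ball (0 : ℂ) r) :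
    radialPrimitive h w = F w - F 0 := by
  have hseg : ∀ t ∈ uIcc (0 : ℝ) 1, (t : ℂ) * w ∈ ball (0 : ℂ) r := fun t ht =>
    ofReal_mul_mem_ball_zero (by rwa [uIcc_of_le zero_le_one] at ht) hw
  have hcont : ContinuousOn (fun t : ℝ => w * h (t * w)) (uIcc 0 1) :=
    continuousOn_const.mul <| hh.comp (by fun_prop) hseg
  simpa [radialPrimitive] using integral_eq_sub_of_hasDerivAt
    (fun t ht => (hF _ (hseg t ht)).comp_ofReal_mul) hcont.intervalIntegrable

lemma hasDerivAt_radialPrimitive {h : ℂ → ℂ} {r : ℝ} (hh : DifferentiableOn ℂ h (ball 0 r))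
    {w : ℂ} (hw : w ∈ ball (0 : ℂ) r) : HasDerivAt (radialPrimitive h) (h w) w := by
  obtain ⟨F, hF⟩ := hh.isExactOn_ball
  have hEq : radialPrimitive h =ᶠ[𝓝 w] fun v => F v - F 0 :=
    eventually_of_mem (isOpen_ball.mem_nhds hw) fun v hv =>
      radialPrimitive_eq_sub hF hh.continuousOn hv
  exact ((hF w hw).sub_const (F 0)).congr_of_eventuallyEq hEq

def CphiVgCoeff₁ (g φ : ℂ → ℂ) (z : ℂ) : ℂ :=
  g (φ z) * deriv (deriv φ) z + deriv g (φ z) * (deriv φ z) ^ 2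

def CphiVgCoeff₂ (g φ : ℂ → ℂ) (z : ℂ) : ℂ := g (φ z) * (deriv φ z) ^ 2

section Derivatives

variable {g φ f : ℂ → ℂ} (hφ : DifferentiableOn ℂ φ uD) (hφm : MapsTo φ uD uD)
  (hg : DifferentiableOn ℂ g uD) (hf : DifferentiableOn ℂ f uD)
include hφ hφm hg hf

lemma hasDerivAt_CphiVg {z : ℂ} (hz : z ∈ uD) :
    HasDerivAt (CphiVg g φ f) (deriv f (φ z) * g (φ z) * deriv φ z) z :=
  (hasDerivAt_radialPrimitive ((hf.deriv isOpen_uD).mul hg) (hφm hz)).comp z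
    (hφ.hasDerivAt (isOpen_uD.mem_nhds hz))

lemma differentiableOn_CphiVg : DifferentiableOn ℂ (CphiVg g φ f) uD := fun _ hz =>
  (hasDerivAt_CphiVg hφ hφm hg hf hz).differentiableAt.differentiableWithinAt

lemma deriv_deriv_CphiVg {z : ℂ} (hz : z ∈ uD) :
    deriv (deriv (CphiVg g φ f)) z =
      deriv (deriv f) (φ z) * CphiVgCoeff₂ g φ z + deriv f (φ z) * CphiVgCoeff₁ g φ z := by
  have hd : ∀ {k : ℂ → ℂ} {w : ℂ}, DifferentiableOn ℂ k uD → w ∈ uD →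
      HasDerivAt k (deriv k w) w := fun hk hw => hk.hasDerivAt (isOpen_uD.mem_nhds hw)
  have hev : deriv (CphiVg g φ f) =ᶠ[𝓝 z] fun w => deriv f (φ w) * g (φ w) * deriv φ w :=
    eventually_of_mem (isOpen_uD.mem_nhds hz) fun w hw => (hasDerivAt_CphiVg hφ hφm hg hf hw).deriv
  have hprod := (((hd (hf.deriv isOpen_uD) (hφm hz)).comp z (hd hφ hz)).mul
    ((hd hg (hφm hz)).comp z (hd hφ hz))).mul (hd (hφ.deriv isOpen_uD) hz)
  rw [hev.deriv_eq]
  refine hprod.deriv.trans ?_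
  simp only [CphiVgCoeff₁, CphiVgCoeff₂, Pi.mul_apply, Function.comp_apply]
  ring

end Derivatives

lemma zygS_nonneg (a : ℝ) (f : ℂ → ℂ) {z : ℂ} (hz : z ∈ uD) : 0 ≤ zygS a f z :=
  mul_nonneg (Real.rpow_nonneg (one_sub_norm_sq_pos hz).le _) (norm_nonneg _)

lemma sSup_zygS_nonneg (a : ℝ) (f : ℂ → ℂ) : 0 ≤ sSup (zygS a f '' uD) :=
  Real.sSup_nonneg <| by rintro _ ⟨z, hz, rfl⟩; exact zygS_nonneg a f hz

lemma sSup_zygS_le_zNorm (a : ℝ) (f : ℂ → ℂ) : sSup (zygS a f '' uD) ≤ zNorm a f := by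
  unfold zNorm
  linarith [norm_nonneg (f 0), norm_nonneg (deriv f 0)]

lemma zNorm_nonneg (a : ℝ) (f : ℂ → ℂ) : 0 ≤ zNorm a f := by
  have := sSup_zygS_nonneg a f
  unfold zNorm
  positivity

lemma zNorm_le_of_zygS_le {a M : ℝ} {f : ℂ → ℂ} (hM : ∀ z ∈ uD, zygS a f z ≤ M) :
    zNorm a f ≤ ‖f 0‖ + ‖deriv f 0‖ + M := by
  unfold zNorm
  gcongr
  exact csSup_le ⟨_, mem_image_of_mem _ (mem_ball_self one_pos)⟩
    (by rintro _ ⟨z, hz, rfl⟩; exact hM z hz)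

lemma memZ.zygS_le_sSup {a : ℝ} {f : ℂ → ℂ} (hf : memZ a f) {z : ℂ} (hz : z ∈ uD) :
    zygS a f z ≤ sSup (zygS a f '' uD) := by
  obtain ⟨M, hM⟩ := hf.2
  exact le_csSup ⟨M, by rintro _ ⟨w, hw, rfl⟩; exact hM w hw⟩ (mem_image_of_mem _ hz)

lemma memZ.zygS_le_zNorm {a : ℝ} {f : ℂ → ℂ} (hf : memZ a f) {z : ℂ} (hz : z ∈ uD) :
    zygS a f z ≤ zNorm a f :=
  (hf.zygS_le_sSup hz).trans (sSup_zygS_le_zNorm a f)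

lemma norm_deriv_deriv_le_of_zygS_le {a M : ℝ} {f : ℂ → ℂ} {z : ℂ} (hz : z ∈ uD)
    (hM : zygS a f z ≤ M) :
    ‖deriv (deriv f) z‖ ≤ M / (1 - ‖z‖ ^ 2) ^ a := by
  rw [le_div_iff₀ (Real.rpow_pos_of_pos (one_sub_norm_sq_pos hz) a), mul_comm]
  exact hM

lemma integral_one_sub_rpow_neg {α : ℝ} (hα : α < 1) :
    ∫ t in (0 : ℝ)..1, (1 - t) ^ (-α) = 1 / (1 - α) := by
  rw [integral_comp_sub_left (fun x : ℝ => x ^ (-α)), integral_rpow (Or.inl (by linarith))]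
  norm_num [Real.zero_rpow (by linarith : -α + 1 ≠ 0)]
  ring

lemma intervalIntegrable_one_sub_rpow_neg {α : ℝ} (hα : α < 1) :
    IntervalIntegrable (fun t : ℝ => (1 - t) ^ (-α)) volume 0 1 := by
  simpa using
    ((intervalIntegrable_rpow' (a := 0) (b := 1) (by linarith : -1 < -α)).comp_sub_left 1).symm

lemma memZ.norm_deriv_sub_deriv_zero_le {α : ℝ} {f : ℂ → ℂ} (hf : memZ α f) (hα0 : 0 ≤ α)
    (hα1 : α < 1) {w : ℂ} (hw : w ∈ uD) :
    ‖deriv f w - deriv f 0‖ ≤ sSup (zygS α f '' uD) / (1 - α) := by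
  set S := sSup (zygS α f '' uD)
  have hf' : DifferentiableOn ℂ (deriv f) uD := hf.1.differentiableOn.deriv isOpen_uD
  have hseg : ∀ t ∈ Icc (0 : ℝ) 1, (t : ℂ) * w ∈ uD := fun t ht => ofReal_mul_mem_ball_zero ht hw
  have hderiv : ∀ t ∈ Icc (0 : ℝ) 1, HasDerivAt (fun s : ℝ => deriv f (s * w))
      (w * deriv (deriv f) (t * w)) t := fun t ht =>
    (hf'.hasDerivAt (isOpen_uD.mem_nhds (hseg t ht))).comp_ofReal_mul
  have hspeed : ∀ t ∈ Ioo (0 : ℝ) 1,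
      ‖deriv (fun s : ℝ => deriv f (s * w)) t‖ ≤ S * (1 - t) ^ (-α) := by
    intro t ht
    have htI : t ∈ Icc (0 : ℝ) 1 := Ioo_subset_Icc_self ht
    have hdist : 1 - t ≤ 1 - ‖(t : ℂ) * w‖ ^ 2 := by
      have hnorm : ‖(t : ℂ) * w‖ ≤ t := by
        rw [norm_mul, Complex.norm_real, Real.norm_of_nonneg htI.1]
        exact mul_le_of_le_one_right htI.1 (mem_uD.1 hw).le
      nlinarith [norm_nonneg ((t : ℂ) * w), ht.2]
    rw [(hderiv t htI).deriv, norm_mul, Real.rpow_neg (by linarith [ht.2]), ← div_eq_mul_inv]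
    calc ‖w‖ * ‖deriv (deriv f) (t * w)‖ ≤ 1 * (S / (1 - ‖(t : ℂ) * w‖ ^ 2) ^ α) :=
          mul_le_mul (mem_uD.1 hw).le
            (norm_deriv_deriv_le_of_zygS_le (hseg t htI) (hf.zygS_le_sSup (hseg t htI)))
            (norm_nonneg _) zero_le_one
      _ ≤ S / (1 - t) ^ α := by
          rw [one_mul]
          have h1t : 0 < 1 - t := by linarith [ht.2]
          gcongr
          exact sSup_zygS_nonneg α f
  have key := norm_sub_le_integral_of_norm_deriv_le_of_le zero_le_one
    (fun t ht => (hderiv t ht).continuousAt.continuousWithinAt)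
    (fun t ht => (hderiv t (Ioo_subset_Icc_self ht)).differentiableAt.differentiableWithinAt)
    (Eventually.of_forall hspeed) ((intervalIntegrable_one_sub_rpow_neg hα1).const_mul S)
  rw [intervalIntegral.integral_const_mul, integral_one_sub_rpow_neg hα1] at key
  simpa [div_eq_mul_one_div S] using key

lemma memZ.norm_deriv_le {α : ℝ} {f : ℂ → ℂ} (hf : memZ α f) (hα0 : 0 ≤ α) (hα1 : α < 1)
    {w : ℂ} (hw : w ∈ uD) : ‖deriv f w‖ ≤ zNorm α f / (1 - α) := by
  have h1α : 0 < 1 - α := by linarith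
  have hS := hf.norm_deriv_sub_deriv_zero_le hα0 hα1 hw
  have hS0 := sSup_zygS_nonneg α f
  rw [le_div_iff₀ h1α]
  rw [le_div_iff₀ h1α] at hS
  unfold zNorm
  nlinarith [norm_sub_norm_le (deriv f w) (deriv f 0), norm_nonneg (f 0), norm_nonneg (deriv f 0)]

lemma hasDerivAt_one_sub_mul_cpow {b z : ℂ} (hbz : ‖b * z‖ < 1) (c : ℂ) :
    HasDerivAt (fun z => (1 - b * z) ^ c) (-(b * c) * (1 - b * z) ^ (c - 1)) z := by
  have hslit : 1 - b * z ∈ Complex.slitPlane := by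
    simpa [sub_eq_add_neg] using
      Complex.mem_slitPlane_of_norm_lt_one (z := -(b * z)) (by rwa [norm_neg])
  refine ((((hasDerivAt_id z).const_mul b).const_sub 1).cpow_const hslit).congr_deriv ?_
  simp only [id_eq, mul_one]
  ring

lemma norm_conj_mul_lt_one {a z : ℂ} (ha : a ∈ uD) (hz : z ∈ uD) : ‖conj a * z‖ < 1 := by
  rw [norm_mul, Complex.norm_conj]
  have := mem_uD.1 ha
  have := mem_uD.1 hz
  nlinarith [norm_nonneg a, norm_nonneg z]

/-- The denominator normalizes the second derivative to `(1 - conj a * z) ^ (-α)`. -/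
def zygTest (α : ℝ) (a z : ℂ) : ℂ :=
  (1 - conj a * z) ^ ((2 - α : ℝ) : ℂ) / (conj a ^ 2 * ((2 - α) * (1 - α) : ℝ))

def zygTestDeriv (α : ℝ) (a z : ℂ) : ℂ :=
  -(1 - conj a * z) ^ ((1 - α : ℝ) : ℂ) / (conj a * (1 - α : ℝ))

section TestFunction

variable {α : ℝ} {a : ℂ} (hα1 : α < 1) (ha : a ∈ uD) (ha0 : a ≠ 0)
include hα1 ha ha0

lemma hasDerivAt_zygTest {z : ℂ} (hz : z ∈ uD) :
    HasDerivAt (zygTest α a) (zygTestDeriv α a z) z := by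
  have h1 : (1 - α : ℂ) ≠ 0 := by exact_mod_cast (by linarith : 1 - α ≠ 0)
  have h2 : (2 - α : ℂ) ≠ 0 := by exact_mod_cast (by linarith : 2 - α ≠ 0)
  have hc : conj a ≠ 0 := by simpa using ha0
  refine ((hasDerivAt_one_sub_mul_cpow (norm_conj_mul_lt_one ha hz) ((2 - α : ℝ) : ℂ)).div_const
    (conj a ^ 2 * ((2 - α) * (1 - α) : ℝ))).congr_deriv ?_
  rw [zygTestDeriv, show ((2 - α : ℝ) : ℂ) - 1 = ((1 - α : ℝ) : ℂ) by push_cast; ring]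
  push_cast
  field_simp

lemma hasDerivAt_zygTestDeriv {z : ℂ} (hz : z ∈ uD) :
    HasDerivAt (zygTestDeriv α a) ((1 - conj a * z) ^ ((-α : ℝ) : ℂ)) z := by
  have h1 : ((1 - α : ℝ) : ℂ) ≠ 0 := by exact_mod_cast (by linarith : 1 - α ≠ 0)
  have hc : conj a ≠ 0 := by simpa using ha0
  refine ((hasDerivAt_one_sub_mul_cpow (norm_conj_mul_lt_one ha hz) ((1 - α : ℝ) : ℂ)).neg.div_const
    (conj a * (1 - α : ℝ))).congr_deriv ?_
  rw [show ((1 - α : ℝ) : ℂ) - 1 = ((-α : ℝ) : ℂ) by push_cast; ring]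
  field_simp

lemma deriv_zygTest {z : ℂ} (hz : z ∈ uD) : deriv (zygTest α a) z = zygTestDeriv α a z :=
  (hasDerivAt_zygTest hα1 ha ha0 hz).deriv

lemma deriv_deriv_zygTest {z : ℂ} (hz : z ∈ uD) :
    deriv (deriv (zygTest α a)) z = (1 - conj a * z) ^ ((-α : ℝ) : ℂ) := by
  have hev : deriv (zygTest α a) =ᶠ[𝓝 z] zygTestDeriv α a :=
    eventually_of_mem (isOpen_uD.mem_nhds hz) fun w hw => deriv_zygTest hα1 ha ha0 hw
  rw [hev.deriv_eq, (hasDerivAt_zygTestDeriv hα1 ha ha0 hz).deriv]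

lemma norm_deriv_deriv_zygTest_self :
    ‖deriv (deriv (zygTest α a)) a‖ = 1 / (1 - ‖a‖ ^ 2) ^ α := by
  rw [deriv_deriv_zygTest hα1 ha ha0 ha, Complex.norm_cpow_real, Complex.conj_mul',
    Real.rpow_neg (norm_nonneg _), one_div]
  norm_cast
  rw [Real.norm_of_nonneg (one_sub_norm_sq_pos ha).le]

lemma zygS_zygTest_le (hα0 : 0 ≤ α) {z : ℂ} (hz : z ∈ uD) : zygS α (zygTest α a) z ≤ 2 := by
  have hz1 := mem_uD.1 hz
  have hlow : 1 - ‖z‖ ≤ ‖1 - conj a * z‖ := by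
    have : ‖conj a * z‖ ≤ ‖z‖ := by
      rw [norm_mul, Complex.norm_conj]
      exact mul_le_of_le_one_left (norm_nonneg z) (mem_uD.1 ha).le
    linarith [norm_sub_norm_le (1 : ℂ) (conj a * z), norm_one (α := ℂ)]
  have hpos : 0 < ‖1 - conj a * z‖ := by linarith
  rw [zygS, deriv_deriv_zygTest hα1 ha ha0 hz, Complex.norm_cpow_real, Real.rpow_neg hpos.le,
    ← div_eq_mul_inv, ← Real.div_rpow (one_sub_norm_sq_pos hz).le hpos.le]
  calc ((1 - ‖z‖ ^ 2) / ‖1 - conj a * z‖) ^ α ≤ 2 ^ α :=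
        Real.rpow_le_rpow (div_nonneg (one_sub_norm_sq_pos hz).le hpos.le)
          (by rw [div_le_iff₀ hpos]; nlinarith [norm_nonneg z]) hα0
    _ ≤ 2 ^ (1 : ℝ) := Real.rpow_le_rpow_of_exponent_le one_le_two hα1.le
    _ = 2 := Real.rpow_one 2

lemma norm_zygTestDeriv_le (hα0 : 0 ≤ α) {z : ℂ} (hz : z ∈ uD) :
    ‖zygTestDeriv α a z‖ ≤ 2 / (‖a‖ * (1 - α)) := by
  have hbase : ‖1 - conj a * z‖ ≤ 2 := by
    have := norm_conj_mul_lt_one ha hz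
    linarith [norm_sub_le (1 : ℂ) (conj a * z), norm_one (α := ℂ)]
  rw [zygTestDeriv, norm_div, norm_neg, Complex.norm_cpow_real, norm_mul, Complex.norm_conj,
    Complex.norm_real, Real.norm_of_nonneg (by linarith)]
  gcongr
  calc ‖1 - conj a * z‖ ^ (1 - α) ≤ 2 ^ (1 - α) := by gcongr
    _ ≤ 2 ^ (1 : ℝ) := Real.rpow_le_rpow_of_exponent_le one_le_two (by linarith)
    _ = 2 := Real.rpow_one 2

lemma memZ_zygTest (hα0 : 0 ≤ α) : memZ α (zygTest α a) :=
  ⟨DifferentiableOn.analyticOn (fun _ hz => (hasDerivAt_zygTest hα1 ha ha0 hz).differentiableAt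
    |>.differentiableWithinAt) isOpen_uD, 2, fun _ hz => zygS_zygTest_le hα1 ha ha0 hα0 hz⟩

lemma zNorm_zygTest_le (hα0 : 0 ≤ α) : zNorm α (zygTest α a) ≤ 5 / (‖a‖ ^ 2 * (1 - α)) := by
  have h1α : 0 < 1 - α := by linarith
  have ha1 : ‖a‖ ≤ 1 := (mem_uD.1 ha).le
  have hapos : 0 < ‖a‖ := norm_pos_iff.2 ha0
  have hK : 0 < ‖a‖ ^ 2 * (1 - α) := by positivity
  have hval : ‖zygTest α a 0‖ ≤ 1 / (‖a‖ ^ 2 * (1 - α)) := by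
    rw [zygTest, mul_zero, sub_zero, Complex.one_cpow, norm_div, norm_one, norm_mul, norm_pow,
      Complex.norm_conj, Complex.norm_real, Real.norm_of_nonneg (by nlinarith)]
    gcongr
    nlinarith
  have hder : ‖deriv (zygTest α a) 0‖ ≤ 2 / (‖a‖ ^ 2 * (1 - α)) := by
    rw [deriv_zygTest hα1 ha ha0 (mem_ball_self one_pos)]
    refine (norm_zygTestDeriv_le hα1 ha ha0 hα0 (mem_ball_self one_pos)).trans ?_
    gcongr
    nlinarith
  have hsup : (2 : ℝ) ≤ 2 / (‖a‖ ^ 2 * (1 - α)) := by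
    rw [le_div_iff₀ hK]
    nlinarith
  have := zNorm_le_of_zygS_le (fun _ hz => zygS_zygTest_le hα1 ha ha0 hα0 hz)
  linarith [show 5 / (‖a‖ ^ 2 * (1 - α)) = 1 / (‖a‖ ^ 2 * (1 - α)) + 2 / (‖a‖ ^ 2 * (1 - α)) +
    2 / (‖a‖ ^ 2 * (1 - α)) by ring]

end TestFunction

lemma memZ_id (a : ℝ) : memZ a fun z => z :=
  ⟨analyticOn_id, 0, fun z _ => by simp [zygS, deriv_id'']⟩

lemma deriv_half_sq : deriv (fun z : ℂ => z ^ 2 / 2) = fun z => z := by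
  funext z
  simp

lemma memZ_half_sq {a : ℝ} (ha : 0 ≤ a) : memZ a fun z : ℂ => z ^ 2 / 2 := by
  refine ⟨(Differentiable.differentiableOn (by fun_prop)).analyticOn isOpen_uD, 1, fun z hz => ?_⟩
  rw [zygS, deriv_half_sq, deriv_id'', norm_one, mul_one]
  exact Real.rpow_le_one (one_sub_norm_sq_pos hz).le (by nlinarith [norm_nonneg z]) ha

lemma div_one_sub_sq_rpow_le_two_mul {x y α : ℝ} (hy : 0 ≤ y) (hx0 : 0 ≤ x) (hx : x < 1 / 2)
    (hα1 : α ≤ 1) : y / (1 - x ^ 2) ^ α ≤ 2 * y := by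
  have hbase : 1 / 2 ≤ 1 - x ^ 2 := by nlinarith
  have hpow : 1 - x ^ 2 ≤ (1 - x ^ 2) ^ α :=
    Real.self_le_rpow_of_le_one (by linarith) (by nlinarith) hα1
  rw [div_le_iff₀ (by linarith)]
  nlinarith

section Necessity

variable {α β : ℝ} {g φ : ℂ → ℂ} (hφ : DifferentiableOn ℂ φ uD) (hφm : MapsTo φ uD uD)
  (hg : DifferentiableOn ℂ g uD) (hmap : ∀ f, memZ α f → memZ β (CphiVg g φ f))
include hφ hφm hg hmap

lemma memHv_CphiVgCoeff₁ : memHv β (CphiVgCoeff₁ g φ) := by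
  obtain ⟨M, hM⟩ := (hmap _ (memZ_id α)).2
  refine ⟨M, fun z hz => ?_⟩
  have h := hM z hz
  rw [zygS, deriv_deriv_CphiVg (f := fun z => z) hφ hφm hg differentiableOn_id hz] at h
  simpa [deriv_id''] using h

lemma memHv_CphiVgCoeff₂ (hα0 : 0 ≤ α) : memHv β (CphiVgCoeff₂ g φ) := by
  obtain ⟨M₁, hM₁⟩ := memHv_CphiVgCoeff₁ hφ hφm hg hmap
  obtain ⟨M, hM⟩ := (hmap _ (memZ_half_sq hα0)).2
  refine ⟨M + M₁, fun z hz => ?_⟩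
  have hq := hM z hz
  rw [zygS, deriv_deriv_CphiVg hφ hφm hg (by fun_prop) hz, deriv_half_sq, deriv_id'',
    one_mul] at hq
  set u := CphiVgCoeff₁ g φ z
  set v := CphiVgCoeff₂ g φ z
  have hsub : ‖v‖ ≤ ‖v + φ z * u‖ + ‖u‖ := by
    calc ‖v‖ = ‖(v + φ z * u) - φ z * u‖ := by rw [add_sub_cancel_right]
      _ ≤ ‖v + φ z * u‖ + ‖φ z‖ * ‖u‖ := (norm_sub_le _ _).trans_eq (by rw [norm_mul])
      _ ≤ ‖v + φ z * u‖ + ‖u‖ := by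
          gcongr
          exact mul_le_of_le_one_left (norm_nonneg u) (mem_uD.1 (hφm hz)).le
  calc (1 - ‖z‖ ^ 2) ^ β * ‖v‖ ≤ (1 - ‖z‖ ^ 2) ^ β * ‖v + φ z * u‖ + (1 - ‖z‖ ^ 2) ^ β * ‖u‖ := by
        rw [← mul_add]
        exact mul_le_mul_of_nonneg_left hsub (Real.rpow_nonneg (one_sub_norm_sq_pos hz).le β)
    _ ≤ M + M₁ := add_le_add hq (hM₁ z hz)

lemma weighted_CphiVgCoeff₂_le_of_half_le {C M₁ : ℝ} (hα0 : 0 ≤ α) (hα1 : α < 1) (hC0 : 0 ≤ C)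
    (hC : ∀ f, memZ α f → zNorm β (CphiVg g φ f) ≤ C * zNorm α f)
    (hM₁ : ∀ z ∈ uD, (1 - ‖z‖ ^ 2) ^ β * ‖CphiVgCoeff₁ g φ z‖ ≤ M₁)
    {z : ℂ} (hz : z ∈ uD) (hφz : 1 / 2 ≤ ‖φ z‖) :
    (1 - ‖z‖ ^ 2) ^ β * ‖CphiVgCoeff₂ g φ z‖ / (1 - ‖φ z‖ ^ 2) ^ α ≤
      C * (20 / (1 - α)) + 4 / (1 - α) * M₁ := by
  set a := φ z
  set u := CphiVgCoeff₁ g φ z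
  set v := CphiVgCoeff₂ g φ z
  have ha : a ∈ uD := hφm hz
  have ha0 : a ≠ 0 := fun h => by norm_num [h] at hφz
  have h1α : 0 < 1 - α := by linarith
  have hwt : 0 ≤ (1 - ‖z‖ ^ 2) ^ β := Real.rpow_nonneg (one_sub_norm_sq_pos hz).le β
  have hM₁0 : 0 ≤ M₁ := (mul_nonneg hwt (norm_nonneg _)).trans (hM₁ z hz)
  have ha2 : 1 / 4 ≤ ‖a‖ ^ 2 := by nlinarith
  have hfa := memZ_zygTest hα1 ha ha0 hα0
  have hsplit : 1 / (1 - ‖a‖ ^ 2) ^ α * ‖v‖ ≤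
      ‖deriv (deriv (CphiVg g φ (zygTest α a))) z‖ + ‖deriv (zygTest α a) a‖ * ‖u‖ := by
    rw [← norm_deriv_deriv_zygTest_self hα1 ha ha0, ← norm_mul, ← norm_mul,
      deriv_deriv_CphiVg hφ hφm hg hfa.1.differentiableOn hz]
    exact (norm_sub_le _ _).trans_eq' (by rw [add_sub_cancel_right])
  have hTz : zygS β (CphiVg g φ (zygTest α a)) z ≤ C * (20 / (1 - α)) := by
    refine ((hmap _ hfa).zygS_le_zNorm hz).trans ((hC _ hfa).trans ?_)
    gcongr
    refine (zNorm_zygTest_le hα1 ha ha0 hα0).trans ?_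
    rw [div_le_div_iff₀ (by positivity) h1α]
    nlinarith [mul_le_mul_of_nonneg_right ha2 h1α.le]
  have hder : ‖deriv (zygTest α a) a‖ ≤ 4 / (1 - α) := by
    rw [deriv_zygTest hα1 ha ha0 ha]
    refine (norm_zygTestDeriv_le hα1 ha ha0 hα0 ha).trans ?_
    rw [div_le_div_iff₀ (by positivity) h1α]
    nlinarith
  calc (1 - ‖z‖ ^ 2) ^ β * ‖v‖ / (1 - ‖a‖ ^ 2) ^ α
      = (1 - ‖z‖ ^ 2) ^ β * (1 / (1 - ‖a‖ ^ 2) ^ α * ‖v‖) := by ring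
    _ ≤ (1 - ‖z‖ ^ 2) ^ β *
          (‖deriv (deriv (CphiVg g φ (zygTest α a))) z‖ + ‖deriv (zygTest α a) a‖ * ‖u‖) := by
        gcongr
    _ = zygS β (CphiVg g φ (zygTest α a)) z +
          ‖deriv (zygTest α a) a‖ * ((1 - ‖z‖ ^ 2) ^ β * ‖u‖) := by
        rw [zygS]
        ring
    _ ≤ C * (20 / (1 - α)) + 4 / (1 - α) * M₁ :=
        add_le_add hTz (mul_le_mul hder (hM₁ z hz) (by positivity) (by positivity))

end Necessity

theorem CphiVg_conditions_of_boundedOp {α β : ℝ} {g φ : ℂ → ℂ} (hα0 : 0 ≤ α) (hα1 : α < 1)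
    (hφ : DifferentiableOn ℂ φ uD) (hφm : MapsTo φ uD uD) (hg : DifferentiableOn ℂ g uD)
    (hB : boundedOp α β (CphiVg g φ)) :
    memHv β (CphiVgCoeff₁ g φ) ∧ ∃ M : ℝ, ∀ z ∈ uD,
      (1 - ‖z‖ ^ 2) ^ β * ‖CphiVgCoeff₂ g φ z‖ / (1 - ‖φ z‖ ^ 2) ^ α ≤ M := by
  obtain ⟨hmap, C, hC0, hC⟩ := hB
  obtain ⟨M₁, hM₁⟩ := memHv_CphiVgCoeff₁ hφ hφm hg hmap
  obtain ⟨M₂, hM₂⟩ := memHv_CphiVgCoeff₂ hφ hφm hg hmap hα0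
  refine ⟨⟨M₁, hM₁⟩, max (2 * M₂) (C * (20 / (1 - α)) + 4 / (1 - α) * M₁), fun z hz => ?_⟩
  rcases lt_or_ge ‖φ z‖ (1 / 2) with hsmall | hlarge
  · refine le_max_of_le_left <| (div_one_sub_sq_rpow_le_two_mul ?_ (norm_nonneg _) hsmall
      hα1.le).trans (by linarith [hM₂ z hz])
    exact mul_nonneg (Real.rpow_nonneg (one_sub_norm_sq_pos hz).le β) (norm_nonneg _)
  · exact le_max_of_le_right
      (weighted_CphiVgCoeff₂_le_of_half_le hφ hφm hg hmap hα0 hα1 hC0.le hC hM₁ hz hlarge)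

lemma norm_radialPrimitive_le {h : ℂ → ℂ} {w : ℂ} {K : ℝ}
    (hK : ∀ t ∈ Icc (0 : ℝ) 1, ‖h (t * w)‖ ≤ K) : ‖radialPrimitive h w‖ ≤ ‖w‖ * K := by
  have hb : ∀ t ∈ uIoc (0 : ℝ) 1, ‖w * h (t * w)‖ ≤ ‖w‖ * K := fun t ht => by
    rw [uIoc_of_le zero_le_one] at ht
    rw [norm_mul]
    exact mul_le_mul_of_nonneg_left (hK t (Ioc_subset_Icc_self ht)) (norm_nonneg w)
  simpa [radialPrimitive] using norm_integral_le_of_norm_le_const hb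

lemma zygS_CphiVg_le {α β M₁ M₂ : ℝ} {g φ f : ℂ → ℂ} (hα0 : 0 ≤ α) (hα1 : α < 1)
    (hφ : DifferentiableOn ℂ φ uD) (hφm : MapsTo φ uD uD) (hg : DifferentiableOn ℂ g uD)
    (hM₁ : ∀ z ∈ uD, (1 - ‖z‖ ^ 2) ^ β * ‖CphiVgCoeff₁ g φ z‖ ≤ M₁)
    (hM₂ : ∀ z ∈ uD, (1 - ‖z‖ ^ 2) ^ β * ‖CphiVgCoeff₂ g φ z‖ / (1 - ‖φ z‖ ^ 2) ^ α ≤ M₂)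
    (hf : memZ α f) {z : ℂ} (hz : z ∈ uD) :
    zygS β (CphiVg g φ f) z ≤ zNorm α f * (M₂ + M₁ / (1 - α)) := by
  have ha : φ z ∈ uD := hφm hz
  have hwt : 0 ≤ (1 - ‖z‖ ^ 2) ^ β := Real.rpow_nonneg (one_sub_norm_sq_pos hz).le β
  have hd : 0 < (1 - ‖φ z‖ ^ 2) ^ α := Real.rpow_pos_of_pos (one_sub_norm_sq_pos ha) α
  have hN := zNorm_nonneg α f
  rw [zygS, deriv_deriv_CphiVg hφ hφm hg hf.1.differentiableOn hz]
  calc (1 - ‖z‖ ^ 2) ^ β * ‖deriv (deriv f) (φ z) * CphiVgCoeff₂ g φ z +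
        deriv f (φ z) * CphiVgCoeff₁ g φ z‖
      ≤ (1 - ‖z‖ ^ 2) ^ β * (‖deriv (deriv f) (φ z)‖ * ‖CphiVgCoeff₂ g φ z‖ +
          ‖deriv f (φ z)‖ * ‖CphiVgCoeff₁ g φ z‖) := by
        gcongr
        exact (norm_add_le _ _).trans_eq (by rw [norm_mul, norm_mul])
    _ = zygS α f (φ z) *
          ((1 - ‖z‖ ^ 2) ^ β * ‖CphiVgCoeff₂ g φ z‖ / (1 - ‖φ z‖ ^ 2) ^ α) +
        ‖deriv f (φ z)‖ * ((1 - ‖z‖ ^ 2) ^ β * ‖CphiVgCoeff₁ g φ z‖) := by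
        rw [zygS]
        field_simp
    _ ≤ zNorm α f * M₂ + zNorm α f / (1 - α) * M₁ := by
        gcongr
        · exact hf.zygS_le_zNorm ha
        · exact hM₂ z hz
        · exact hf.norm_deriv_le hα0 hα1 ha
        · exact hM₁ z hz
    _ = zNorm α f * (M₂ + M₁ / (1 - α)) := by ring

theorem boundedOp_CphiVg_of_conditions {α β : ℝ} {g φ : ℂ → ℂ} (hα0 : 0 ≤ α) (hα1 : α < 1)
    (hφ : DifferentiableOn ℂ φ uD) (hφm : MapsTo φ uD uD) (hg : DifferentiableOn ℂ g uD)
    (h₁ : memHv β (CphiVgCoeff₁ g φ))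
    (h₂ : ∃ M : ℝ, ∀ z ∈ uD,
      (1 - ‖z‖ ^ 2) ^ β * ‖CphiVgCoeff₂ g φ z‖ / (1 - ‖φ z‖ ^ 2) ^ α ≤ M) :
    boundedOp α β (CphiVg g φ) := by
  obtain ⟨M₁, hM₁⟩ := h₁
  obtain ⟨M₂, hM₂⟩ := h₂
  have h0 : (0 : ℂ) ∈ uD := mem_ball_self one_pos
  have hzyg : ∀ f, memZ α f → ∀ z ∈ uD,
      zygS β (CphiVg g φ f) z ≤ zNorm α f * (M₂ + M₁ / (1 - α)) := fun _ hf _ hz =>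
    zygS_CphiVg_le hα0 hα1 hφ hφm hg hM₁ hM₂ hf hz
  obtain ⟨K, hK⟩ := isCompact_Icc.exists_bound_of_continuousOn <|
    hg.continuousOn.comp (by fun_prop) fun t ht => ofReal_mul_mem_ball_zero ht (hφm h0)
  set C := M₂ + (M₁ + K + ‖g (φ 0) * deriv φ 0‖) / (1 - α)
  refine ⟨fun f hf => ⟨(differentiableOn_CphiVg hφ hφm hg hf.1.differentiableOn).analyticOn
    isOpen_uD, _, hzyg f hf⟩, max C 1, lt_max_of_lt_right one_pos, fun f hf => ?_⟩
  have hf' : ∀ w ∈ uD, ‖deriv f w‖ ≤ zNorm α f / (1 - α) := fun w hw =>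
    hf.norm_deriv_le hα0 hα1 hw
  have hval : ‖CphiVg g φ f 0‖ ≤ zNorm α f / (1 - α) * K := by
    have hbound : ∀ t ∈ Icc (0 : ℝ) 1,
        ‖deriv f (t * φ 0) * g (t * φ 0)‖ ≤ zNorm α f / (1 - α) * K :=
      fun t ht => (norm_mul _ _).trans_le <| mul_le_mul
        (hf' _ (ofReal_mul_mem_ball_zero ht (hφm h0))) (hK t ht) (norm_nonneg _)
        (div_nonneg (zNorm_nonneg α f) (by linarith))
    refine (norm_radialPrimitive_le (h := fun w => deriv f w * g w) hbound).trans ?_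
    exact mul_le_of_le_one_left ((norm_nonneg _).trans (hbound 0 (by simp)))
      (mem_uD.1 (hφm h0)).le
  have hder : ‖deriv (CphiVg g φ f) 0‖ ≤ zNorm α f / (1 - α) * ‖g (φ 0) * deriv φ 0‖ := by
    rw [(hasDerivAt_CphiVg hφ hφm hg hf.1.differentiableOn h0).deriv, mul_assoc, norm_mul]
    exact mul_le_mul_of_nonneg_right (hf' _ (hφm h0)) (norm_nonneg _)
  calc zNorm β (CphiVg g φ f) ≤ zNorm α f * C := by
        have := zNorm_le_of_zygS_le (hzyg f hf)
        have hC : zNorm α f * C = zNorm α f * (M₂ + M₁ / (1 - α)) +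
            zNorm α f / (1 - α) * K + zNorm α f / (1 - α) * ‖g (φ 0) * deriv φ 0‖ := by ring
        linarith
    _ ≤ max C 1 * zNorm α f := by
        rw [mul_comm]
        exact mul_le_mul_of_nonneg_right (le_max_left _ _) (zNorm_nonneg α f)

theorem stmt_3_general (α β : ℝ) (hα0 : 0 < α) (hα1 : α < 1)
    (φ g : ℂ → ℂ) (hφ : AnalyticOn ℂ φ uD) (hφm : Set.MapsTo φ uD uD)
    (hg : AnalyticOn ℂ g uD) :
    boundedOp α β (CphiVg g φ) ↔
      (memHv β (fun z => g (φ z) * deriv (deriv φ) z + deriv g (φ z) * (deriv φ z) ^ 2) ∧ (∃ M : ℝ, ∀ z ∈ uD, (1 - ‖z‖ ^ 2) ^ β * ‖g (φ z) * (deriv φ z) ^ 2‖ / (1 - ‖φ z‖ ^ 2) ^ α ≤ M)) :=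
  ⟨CphiVg_conditions_of_boundedOp hα0.le hα1 hφ.differentiableOn hφm hg.differentiableOn,
    fun h => boundedOp_CphiVg_of_conditions hα0.le hα1 hφ.differentiableOn hφm
      hg.differentiableOn h.1 h.2⟩

theorem stmt_3 (α β : ℝ) (hα0 : 0 < α) (hα1 : α < 1) (hβ : 0 < β)
    (φ g : ℂ → ℂ) (hφ : AnalyticOn ℂ φ uD) (hφm : Set.MapsTo φ uD uD)
    (hg : AnalyticOn ℂ g uD) :
    boundedOp α β (CphiVg g φ) ↔
      (memHv β (fun z => g (φ z) * deriv (deriv φ) z + deriv g (φ z) * (deriv φ z) ^ 2) ∧ (∃ M : ℝ, ∀ z ∈ uD, (1 - ‖z‖ ^ 2) ^ β * ‖g (φ z) * (deriv φ z) ^ 2‖ / (1 - ‖φ z‖ ^ 2) ^ α ≤ M)) :=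
  stmt_3_general α β hα0 hα1 φ g hφ hφm hg
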